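/- arXiv:2210.06507 — 7 statements merged into one kernel-verified Lean document; each statement's English description precedes it below -/
import Mathlib

section
/- Let v : (Fin n → ℝ) → ℝ be submodular over signals (for every coordinate i, every s' ≥ s coordinatewise and every t ≥ s_i, v(s'[i := t]) - v(s'[i := s_i]) ≤ v(s[i := t]) - v(s)). Then for any subset T of coordinates and any signal profiles s, s' with s'_t ≤ s_t for all t ∈ T and s'_j = s_j for j ∉ T, we have ∑_{t ∈ T} (v(s) - v(s[t := s'_t])) ≤ v(s) - v(s'). In particular, if v is nonnegative, ∑_{t ∈ T} (v(s) - v(s[t := s'_t])) ≤ v(s). -/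
/-- Submodularity over signals for real-signal valuations. -/
def SOSr {n : ℕ} (v : (Fin n → ℝ) → ℝ) : Prop :=
  ∀ (i : Fin n) (s s' : Fin n → ℝ) (t : ℝ), s ≤ s' → s' i = s i → s i ≤ t →
    v (Function.update s' i t) - v s' ≤ v (Function.update s i t) - v s

theorem stmt_0 {n : ℕ} (v : (Fin n → ℝ) → ℝ) (hsos : SOSr v)
    (T : Finset (Fin n)) (s s' : Fin n → ℝ)
    (hle : ∀ t ∈ T, s' t ≤ s t) (heq : ∀ j ∉ T, s' j = s j) :
    (∑ t ∈ T, (v s - v (Function.update s t (s' t))) ≤ v s - v s') ∧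
    ((∀ u, 0 ≤ v u) → ∑ t ∈ T, (v s - v (Function.update s t (s' t))) ≤ v s) := by
  classical
  set hy : Finset (Fin n) → (Fin n → ℝ) := fun U j => if j ∈ U then s' j else s j with hhy
  have key : ∀ U : Finset (Fin n), U ⊆ T →
      ∑ t ∈ U, (v s - v (Function.update s t (s' t))) ≤ v s - v (hy U) := by
    intro U
    induction U using Finset.induction_on with
    | empty =>
      intro _
      simp [hhy]
    | @insert a U' ha ih =>
      intro hsub
      have haT : a ∈ T := hsub (Finset.mem_insert_self a U')
      have hU'T : U' ⊆ T := fun x hx => hsub (Finset.mem_insert_of_mem hx)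
      have hins : hy (insert a U') = Function.update (hy U') a (s' a) := by
        funext j
        by_cases hj : j = a
        · subst hj; simp [hhy]
        · simp [hhy, Function.update_of_ne hj, hj]
      have hle1 : Function.update (hy U') a (s' a) ≤ Function.update s a (s' a) := by
        intro j
        by_cases hj : j = a
        · subst hj; simp
        · simp only [Function.update_of_ne hj, hhy]
          by_cases hjU : j ∈ U'
          · simp [hjU]; exact hle j (hU'T hjU)
          · simp [hjU]
      have heq1 : Function.update s a (s' a) a = Function.update (hy U') a (s' a) a := by simp
      have hle2 : Function.update (hy U') a (s' a) a ≤ s a := by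
        simp; exact hle a haT
      have hstep := hsos a (Function.update (hy U') a (s' a)) (Function.update s a (s' a))
        (s a) hle1 heq1 hle2
      have e1 : Function.update (Function.update s a (s' a)) a (s a) = s := by
        rw [Function.update_idem, Function.update_eq_self]
      have e2 : Function.update (Function.update (hy U') a (s' a)) a (s a) = hy U' := by
        rw [Function.update_idem]
        have : hy U' a = s a := by simp [hhy, ha]
        rw [← this, Function.update_eq_self]
      rw [e1, e2] at hstep
      rw [Finset.sum_insert ha, hins]
      have := ih hU'T
      linarith
  have h1 : hy T = s' := by
    funext j
    by_cases hj : j ∈ T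
    · simp [hhy, hj]
    · simp [hhy, hj, heq j hj]
  have main := key T (le_refl T)
  rw [h1] at main
  refine ⟨main, fun hpos => ?_⟩
  have := hpos s'
  linarith
end

section
/- Let v₁, …, vₙ : (Fin n → ℝ≥0) → ℝ be nonnegative, weakly increasing SOS valuations, let s be a signal profile, let M = max_i v_i(s) > 0, and for each agent i define x_i(s) = (M - max_{j ≠ i} v_j(s[i := 0])) / (2M). Then ∑_{i=1}^n x_i(s) ≤ 1. -/
/-- Submodularity over signals for nonnegative-signal valuations. -/
def SOS {n : ℕ} (v : (Fin n → NNReal) → ℝ) : Prop :=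
  ∀ (i : Fin n) (s s' : Fin n → NNReal) (t : NNReal), s ≤ s' → s' i = s i → s i ≤ t →
    v (Function.update s' i t) - v s' ≤ v (Function.update s i t) - v s

private def zeroOn {n : ℕ} (T : Finset (Fin n)) (s : Fin n → NNReal) : Fin n → NNReal :=
  fun j => if j ∈ T then 0 else s j

private lemma zeroOn_insert {n : ℕ} (T : Finset (Fin n)) (s : Fin n → NNReal) (i : Fin n) :
    zeroOn (insert i T) s = Function.update (zeroOn T s) i 0 := by
  funext j
  by_cases h : j = i
  · subst h; simp [zeroOn, Function.update]
  · simp [zeroOn, Function.update, h, Finset.mem_insert]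

private lemma sum_marginals {n : ℕ} (v : (Fin n → NNReal) → ℝ) (hsos : SOS v)
    (s : Fin n → NNReal) (T : Finset (Fin n)) :
    ∑ i ∈ T, (v s - v (Function.update s i 0)) ≤ v s - v (zeroOn T s) := by
  induction T using Finset.induction_on with
  | empty =>
    have he : zeroOn (∅ : Finset (Fin n)) s = s := by funext j; simp [zeroOn]
    simp [he]
  | @insert i T hiT ih =>
    rw [Finset.sum_insert hiT, zeroOn_insert]
    have hle : Function.update (zeroOn T s) i 0 ≤ Function.update s i 0 := by
      intro j
      by_cases h : j = i
      · subst h; simp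
      · simp [Function.update, h, zeroOn]
        split <;> simp
    have hkey := hsos i (Function.update (zeroOn T s) i 0) (Function.update s i 0) (s i)
      hle (by simp) (by simp)
    have h1 : Function.update (Function.update s i 0) i (s i) = s := by
      rw [Function.update_idem, Function.update_eq_self]
    have h2 : Function.update (Function.update (zeroOn T s) i 0) i (s i) = zeroOn T s := by
      rw [Function.update_idem]
      have : zeroOn T s i = s i := by simp [zeroOn, hiT]
      rw [← this, Function.update_eq_self]
    rw [h1, h2] at hkey
    linarith

theorem stmt_1 {n : ℕ} (hn : 2 ≤ n) (v : Fin n → (Fin n → NNReal) → ℝ)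
    (hnonneg : ∀ i s, 0 ≤ v i s) (hmono : ∀ i, Monotone (v i)) (hsos : ∀ i, SOS (v i))
    (s : Fin n → NNReal)
    (M : ℝ) (hMub : ∀ i, v i s ≤ M) (hMmem : ∃ i, v i s = M) (hMpos : 0 < M)
    (m : Fin n → ℝ)
    (hmub : ∀ i j, j ≠ i → v j (Function.update s i 0) ≤ m i)
    (hmmem : ∀ i, ∃ j, j ≠ i ∧ v j (Function.update s i 0) = m i) :
    ∑ i, (M - m i) / (2 * M) ≤ 1 := by
  obtain ⟨i₀, hi₀⟩ := hMmem
  set T : Finset (Fin n) := Finset.univ.erase i₀ with hT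
  have hsum : ∑ i, (M - m i) ≤ 2 * M := by
    have hsplit : ∑ i, (M - m i) = (M - m i₀) + ∑ i ∈ T, (M - m i) := by
      rw [hT]
      exact (Finset.add_sum_erase _ _ (Finset.mem_univ i₀)).symm
    have h0 : M - m i₀ ≤ M := by
      obtain ⟨j, hj, hje⟩ := hmmem i₀
      have := hnonneg j (Function.update s i₀ 0)
      linarith [hje ▸ this]
    have hbound : ∑ i ∈ T, (M - m i) ≤ ∑ i ∈ T, (v i₀ s - v i₀ (Function.update s i 0)) := by
      apply Finset.sum_le_sum
      intro i hi
      have hne : i₀ ≠ i := (Finset.mem_erase.mp hi).1.symm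
      have := hmub i i₀ hne
      linarith [hi₀ ▸ le_refl (v i₀ s)]
    have hmarg := sum_marginals (v i₀) (hsos i₀) s T
    have hzn := hnonneg i₀ (zeroOn T s)
    have : ∑ i ∈ T, (M - m i) ≤ M := by
      calc ∑ i ∈ T, (M - m i) ≤ ∑ i ∈ T, (v i₀ s - v i₀ (Function.update s i 0)) := hbound
        _ ≤ v i₀ s - v i₀ (zeroOn T s) := hmarg
        _ ≤ v i₀ s := by linarith
        _ = M := hi₀
    linarith
  have h2M : (0:ℝ) < 2 * M := by linarith
  rw [← Finset.sum_div, div_le_one h2M]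
  exact hsum
end

section
/- Let v : (Fin n → ℝ≥0) → ℝ be a nonnegative SOS valuation, let s be a signal profile, fix agent i, and for A ⊆ [n] \ {i} write v(s_A, 0_B, s_i) for the profile where agents in A keep their signals, agents in B = ([n]\{i})\A have signal 0, and i keeps s_i. Then for any 1 ≤ a ≤ n-2: (1/(a·C(n-1,a))) · ∑_{A : |A|=a} v(s_A, 0_B, s_i) ≥ (1/((a+1)·C(n-1,a+1))) · ∑_{A : |A|=a+1} v(s_A, 0_B, s_i). -/
/-- The profile which agrees with `s` on `A ∪ {i}` and is `0` elsewhere. -/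
def zeroOutside {n : ℕ} (s : Fin n → NNReal) (i : Fin n) (A : Finset (Fin n)) :
    Fin n → NNReal :=
  fun j => if j = i ∨ j ∈ A then s j else 0

/-!
Write `g A = v (zeroOutside s i A)`. Applying SOS to the agents of `A` one at a time telescopes
into `∑ j ∈ A, (g A - g (A \ {j})) ≤ g A - g ∅ ≤ g A`, i.e. `a · g A ≤ ∑ j ∈ A, g (A \ {j})`
whenever `|A| = a + 1`. Summing over all `(a+1)`-sets, every `a`-set `B` appears once for each of
the `n - 1 - a` agents outside `B ∪ {i}`, and `(a + 1) · C(n-1, a+1) = (n - 1 - a) · C(n-1, a)`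
turns the resulting inequality into the claim.
-/

open Finset

namespace Finset

variable {α M : Type*} [DecidableEq α]

theorem sum_powersetCard_succ_sum_erase [AddCommMonoid M] (T : Finset α) (k : ℕ)
    (f : Finset α → M) :
    ∑ A ∈ T.powersetCard (k + 1), ∑ j ∈ A, f (A.erase j) =
      (#T - k) • ∑ B ∈ T.powersetCard k, f B := by
  have hswap : ∑ A ∈ T.powersetCard (k + 1), ∑ j ∈ A, f (A.erase j) =
      ∑ B ∈ T.powersetCard k, ∑ _j ∈ T \ B, f B := by
    rw [sum_sigma', sum_sigma']
    refine sum_nbij' (fun p => ⟨p.1.erase p.2, p.2⟩) (fun p => ⟨insert p.2 p.1, p.2⟩)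
      ?_ ?_ ?_ ?_ fun _ _ => rfl
    · rintro ⟨A, j⟩ hp
      simp only [mem_sigma, mem_powersetCard, mem_sdiff] at hp ⊢
      obtain ⟨⟨hAT, hAcard⟩, hjA⟩ := hp
      refine ⟨⟨(erase_subset _ _).trans hAT, ?_⟩, hAT hjA, notMem_erase _ _⟩
      rw [card_erase_of_mem hjA, hAcard, Nat.add_sub_cancel]
    · rintro ⟨B, j⟩ hp
      simp only [mem_sigma, mem_powersetCard, mem_sdiff] at hp ⊢
      obtain ⟨⟨hBT, hBcard⟩, hjT, hjB⟩ := hp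
      exact ⟨⟨insert_subset hjT hBT, by rw [card_insert_of_notMem hjB, hBcard]⟩,
        mem_insert_self _ _⟩
    · rintro ⟨A, j⟩ hp
      simp only [mem_sigma] at hp
      simp [insert_erase hp.2]
    · rintro ⟨B, j⟩ hp
      simp only [mem_sigma, mem_sdiff] at hp
      simp [erase_insert hp.2.2]
  rw [hswap, smul_sum]
  refine sum_congr rfl fun B hB => ?_
  rw [mem_powersetCard] at hB
  rw [sum_const, card_sdiff_of_subset hB.1, hB.2]

theorem mul_sum_powersetCard_succ_le (T : Finset α) (k : ℕ) (g : Finset α → ℝ)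
    (hg : ∀ A ∈ T.powersetCard (k + 1), (k : ℝ) * g A ≤ ∑ j ∈ A, g (A.erase j)) :
    (k : ℝ) * ∑ A ∈ T.powersetCard (k + 1), g A ≤
      ((#T - k : ℕ) : ℝ) * ∑ B ∈ T.powersetCard k, g B := by
  rw [mul_sum, ← nsmul_eq_mul, ← sum_powersetCard_succ_sum_erase]
  exact sum_le_sum hg

end Finset

section zeroOutside

variable {n : ℕ} (s : Fin n → NNReal) (i : Fin n)

theorem monotone_zeroOutside : Monotone (zeroOutside s i) := by
  intro A A' h j
  unfold zeroOutside
  split_ifs with hA hA'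
  · exact le_rfl
  · exact absurd (hA.imp_right (@h j)) hA'
  · exact zero_le
  · exact le_rfl

theorem update_zeroOutside (A : Finset (Fin n)) (j : Fin n) :
    Function.update (zeroOutside s i A) j (s j) = zeroOutside s i (insert j A) := by
  funext k
  by_cases hk : k = j
  · subst hk
    simp [zeroOutside]
  · simp [zeroOutside, hk]

end zeroOutside

namespace SOS

variable {n : ℕ} {v : (Fin n → NNReal) → ℝ} (hsos : SOS v) (s : Fin n → NNReal) (i : Fin n)
include hsos

theorem marginal_zeroOutside_antitone {B B' : Finset (Fin n)} (hBB' : B ⊆ B') {j : Fin n}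
    (hj : j ∉ B') :
    v (zeroOutside s i (insert j B')) - v (zeroOutside s i B') ≤
      v (zeroOutside s i (insert j B)) - v (zeroOutside s i B) := by
  have hjB : j ∉ B := fun h => hj (hBB' h)
  have hsame : zeroOutside s i B' j = zeroOutside s i B j := by simp [zeroOutside, hj, hjB]
  have hle : zeroOutside s i B j ≤ s j := by
    unfold zeroOutside
    split_ifs <;> simp
  simpa only [update_zeroOutside] using
    hsos j _ _ (s j) (monotone_zeroOutside s i hBB') hsame hle

theorem sum_marginal_zeroOutside_le (A : Finset (Fin n)) :
    ∑ j ∈ A, (v (zeroOutside s i A) - v (zeroOutside s i (A.erase j))) ≤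
      v (zeroOutside s i A) - v (zeroOutside s i ∅) := by
  induction A using Finset.induction_on with
  | empty => simp
  | @insert x B hx ih =>
    have hstep : ∀ j ∈ B,
        v (zeroOutside s i (insert x B)) - v (zeroOutside s i ((insert x B).erase j)) ≤
          v (zeroOutside s i B) - v (zeroOutside s i (B.erase j)) := by
      intro j hj
      have hjx : j ≠ x := fun h => hx (h ▸ hj)
      have h := hsos.marginal_zeroOutside_antitone s i (subset_insert x (B.erase j))
        (j := j) (by simp [hjx])
      rwa [insert_comm, insert_erase hj, ← erase_insert_of_ne hjx.symm] at h
    rw [sum_insert hx, erase_insert hx]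
    linarith [sum_le_sum hstep]

theorem mul_le_sum_erase_zeroOutside (hnonneg : ∀ s, 0 ≤ v s) {k : ℕ} {A : Finset (Fin n)}
    (hA : #A = k + 1) :
    (k : ℝ) * v (zeroOutside s i A) ≤ ∑ j ∈ A, v (zeroOutside s i (A.erase j)) := by
  have h := hsos.sum_marginal_zeroOutside_le s i A
  rw [sum_sub_distrib, sum_const, nsmul_eq_mul, hA] at h
  push_cast at h
  linarith [hnonneg (zeroOutside s i ∅)]

end SOS

theorem one_div_mul_mul_le_of_mul_le {a m c x y : ℝ} (ha : 0 < a) (hm : 0 ≤ m) (hc : 0 ≤ c)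
    (hx : 0 ≤ x) (h : a * y ≤ m * x) : 1 / (m * c) * y ≤ 1 / (a * c) * x := by
  rcases hm.eq_or_lt with rfl | hm
  · rw [zero_mul, div_zero, zero_mul]
    positivity
  rcases hc.eq_or_lt with rfl | hc
  · simp
  rw [one_div_mul_eq_div, one_div_mul_eq_div, div_le_div_iff₀ (by positivity) (by positivity)]
  linarith [mul_le_mul_of_nonneg_right h hc.le]

theorem stmt_4_general {n : ℕ} (v : (Fin n → NNReal) → ℝ)
    (hnonneg : ∀ s, 0 ≤ v s) (hsos : SOS v)
    (s : Fin n → NNReal) (i : Fin n) (a : ℕ) (ha1 : 1 ≤ a) :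
    (1 / ((a : ℝ) * (Nat.choose (n - 1) a : ℝ))) *
        ∑ A ∈ (Finset.univ.erase i).powersetCard a, v (zeroOutside s i A) ≥
      (1 / (((a : ℝ) + 1) * (Nat.choose (n - 1) (a + 1) : ℝ))) *
        ∑ A ∈ (Finset.univ.erase i).powersetCard (a + 1), v (zeroOutside s i A) := by
  set T : Finset (Fin n) := univ.erase i
  have hT : #T = n - 1 := by simp [T, card_erase_of_mem]
  have hcount := T.mul_sum_powersetCard_succ_le a (fun A => v (zeroOutside s i A))
    fun A hA => hsos.mul_le_sum_erase_zeroOutside s i hnonneg (mem_powersetCard.1 hA).2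
  have hchoose : ((a : ℝ) + 1) * (n - 1).choose (a + 1) =
      ((n - 1 - a : ℕ) : ℝ) * (n - 1).choose a := by
    rw [mul_comm, mul_comm ((n - 1 - a : ℕ) : ℝ)]
    exact_mod_cast Nat.choose_succ_right_eq (n - 1) a
  rw [ge_iff_le, hchoose, ← hT]
  exact one_div_mul_mul_le_of_mul_le (by exact_mod_cast ha1) (Nat.cast_nonneg _)
    (Nat.cast_nonneg _) (sum_nonneg fun B _ => hnonneg _) hcount

theorem stmt_4 {n : ℕ} (v : (Fin n → NNReal) → ℝ)
    (hnonneg : ∀ s, 0 ≤ v s) (hmono : Monotone v) (hsos : SOS v)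
    (s : Fin n → NNReal) (i : Fin n) (a : ℕ) (ha1 : 1 ≤ a) (ha2 : a ≤ n - 2) :
    (1 / ((a : ℝ) * (Nat.choose (n - 1) a : ℝ))) *
        ∑ A ∈ (Finset.univ.erase i).powersetCard a, v (zeroOutside s i A) ≥
      (1 / (((a : ℝ) + 1) * (Nat.choose (n - 1) (a + 1) : ℝ))) *
        ∑ A ∈ (Finset.univ.erase i).powersetCard (a + 1), v (zeroOutside s i A) :=
  stmt_4_general v hnonneg hsos s i a ha1
end

section
/- Random sampling welfare bound: Let v_1, …, v_n be nonnegative, weakly increasing SOS valuations with agents 1 and 2 achieving the largest and second largest values v_(1)(s) and v_(2)(s) at profile s. Partition [n] randomly into A and B where each agent independently goes to A with probability p. Allocate the item to argmax_{i ∈ B} w_i where w_i = v_i(s_A, s_i, 0_{B\{i\}}). Then the expected welfare of the allocated agent satisfies E[max_{i ∈ B} w_i] ≥ p(1-p)·v_(1)(s) + p²(1-p)·v_(2)(s), hence the approximation ratio is at least p(1-p)(1 + p·v_(2)(s)/v_(1)(s)). -/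
/-!
Both bounds rest on `(1 - p) f ∅ + p f T ≤ E f(A)` for a submodular `f` and a `p`-random subset
`A ⊆ T`, proved by induction on `T`, conditioning on one element. By the SOS condition,
`A ↦ v_i(s_A, s_i, 0)` is submodular. Splitting the expectation by whether `i₁` and `i₂` are
sampled, the event `i₁ ∉ A` contributes at least `(1 - p) · p v_{i₁}(s)` and the disjoint event
`i₁ ∈ A, i₂ ∉ A` at least `p (1 - p) · p v_{i₂}(s)`, because the winner's value dominates that of
`i₁`, resp. `i₂`.
-/

open Finset

section RandomSubset

variable {α : Type*}

/-- Expectation of `f A` when each element of `T` lies in `A` independently with probability `p`. -/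
def bernoulliExpect (p : ℝ) (T : Finset α) (f : Finset α → ℝ) : ℝ :=
  ∑ A ∈ T.powerset, p ^ A.card * (1 - p) ^ (T.card - A.card) * f A

theorem bernoulliExpect_insert [DecidableEq α] (p : ℝ) {T : Finset α} {a : α} (ha : a ∉ T)
    (f : Finset α → ℝ) :
    bernoulliExpect p (insert a T) f =
      (1 - p) * bernoulliExpect p T f + p * bernoulliExpect p T (fun A => f (insert a A)) := by
  unfold bernoulliExpect
  rw [sum_powerset_insert ha, card_insert_of_notMem ha, mul_sum, mul_sum]
  congr 1 <;> refine sum_congr rfl fun A hA => ?_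
  · rw [Nat.sub_add_comm (card_le_card (mem_powerset.mp hA))]
    ring
  · rw [card_insert_of_notMem fun h => ha (mem_powerset.mp hA h), Nat.add_sub_add_right]
    ring

theorem bernoulliExpect_mono {p : ℝ} (hp0 : 0 ≤ p) (hp1 : p ≤ 1) {T : Finset α}
    {f g : Finset α → ℝ} (h : ∀ A ⊆ T, f A ≤ g A) :
    bernoulliExpect p T f ≤ bernoulliExpect p T g :=
  sum_le_sum fun A hA => mul_le_mul_of_nonneg_left (h A (mem_powerset.mp hA))
    (mul_nonneg (pow_nonneg hp0 _) (pow_nonneg (sub_nonneg.mpr hp1) _))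

theorem bernoulliExpect_nonneg {p : ℝ} (hp0 : 0 ≤ p) (hp1 : p ≤ 1) {T : Finset α}
    {f : Finset α → ℝ} (h : ∀ A ⊆ T, 0 ≤ f A) : 0 ≤ bernoulliExpect p T f := by
  simpa [bernoulliExpect] using bernoulliExpect_mono hp0 hp1 (f := 0) h

variable [DecidableEq α]

/-- Submodularity of a set function, in its marginal-value form. -/
def HasDiminishingReturns (f : Finset α → ℝ) : Prop :=
  ∀ ⦃B C : Finset α⦄ ⦃j : α⦄, B ⊆ C → j ∉ C → f (insert j C) - f C ≤ f (insert j B) - f B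

namespace HasDiminishingReturns

variable {f : Finset α → ℝ}

theorem comp_insert (hf : HasDiminishingReturns f) (a : α) :
    HasDiminishingReturns fun A => f (insert a A) := by
  intro B C j hBC hjC
  by_cases hja : j = a
  · simp [hja]
  · simp only [insert_comm a j]
    exact hf (insert_subset_insert a hBC) (by simp [hja, hjC])

theorem le_bernoulliExpect (hf : HasDiminishingReturns f) {p : ℝ} (hp0 : 0 ≤ p)
    (hp1 : p ≤ 1) (T : Finset α) :
    (1 - p) * f ∅ + p * f T ≤ bernoulliExpect p T f := by
  induction T using Finset.induction_on generalizing f with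
  | empty => norm_num [bernoulliExpect]; linarith
  | @insert a T haT ih =>
    rw [bernoulliExpect_insert p haT]
    have hT := ih hf
    have haT' := ih (hf.comp_insert a)
    have hmarginal := hf (empty_subset T) haT
    have hq : 0 ≤ 1 - p := sub_nonneg.mpr hp1
    -- the cross term is `p (1 - p)` times the marginal value of `a` at `∅` minus that at `T`
    nlinarith [mul_le_mul_of_nonneg_left hT hq, mul_le_mul_of_nonneg_left haT' hp0,
      mul_le_mul_of_nonneg_left hmarginal (mul_nonneg hp0 hq)]

theorem mul_le_bernoulliExpect (hf : HasDiminishingReturns f) (hf0 : 0 ≤ f ∅) {p : ℝ}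
    (hp0 : 0 ≤ p) (hp1 : p ≤ 1) (T : Finset α) :
    p * f T ≤ bernoulliExpect p T f := by
  have := hf.le_bernoulliExpect hp0 hp1 T
  nlinarith [mul_nonneg (sub_nonneg.mpr hp1) hf0]

end HasDiminishingReturns

end RandomSubset

section zeroOutside

variable {n : ℕ} (s : Fin n → NNReal) {i j : Fin n} {A B : Finset (Fin n)}

theorem zeroOutside_mono (h : A ⊆ B) : zeroOutside s i A ≤ zeroOutside s i B := by
  intro k
  unfold zeroOutside
  split_ifs with hA hB
  · exact le_rfl
  · exact absurd (hA.imp id fun hk => h hk) hB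
  · exact zero_le
  · exact le_rfl

theorem zeroOutside_le_self : zeroOutside s i A ≤ s := by
  intro k
  unfold zeroOutside
  split_ifs
  exacts [le_rfl, zero_le]

theorem zeroOutside_apply_of_notMem (hjA : j ∉ A) :
    zeroOutside s i A j = if j = i then s j else 0 := by
  simp [zeroOutside, hjA]

theorem zeroOutside_insert (j : Fin n) (A : Finset (Fin n)) :
    zeroOutside s i (insert j A) = Function.update (zeroOutside s i A) j (s j) := by
  funext k
  by_cases hk : k = j
  · simp [zeroOutside, hk]
  · simp [zeroOutside, Function.update, hk]

theorem zeroOutside_eq_self (h : ∀ j ≠ i, j ∈ A) : zeroOutside s i A = s := by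
  funext k
  by_cases hk : k = i <;> simp [zeroOutside, hk, h k]

end zeroOutside

theorem SOS.hasDiminishingReturns_zeroOutside {n : ℕ} {v : (Fin n → NNReal) → ℝ} (hv : SOS v)
    (s : Fin n → NNReal) (i : Fin n) :
    HasDiminishingReturns fun A => v (zeroOutside s i A) := by
  intro B C j hBC hjC
  simp only [zeroOutside_insert]
  refine hv j _ _ (s j) (zeroOutside_mono s hBC) ?_ (zeroOutside_le_self s j)
  rw [zeroOutside_apply_of_notMem s hjC, zeroOutside_apply_of_notMem s fun h => hjC (hBC h)]

section Welfare

variable {n : ℕ} (v : Fin n → (Fin n → NNReal) → ℝ) (s : Fin n → NNReal)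

/-- `A` is the sampled set; the item goes to the agent outside it with the largest `w_i`. -/
noncomputable def sampledWelfare (A : Finset (Fin n)) : ℝ :=
  if h : (univ \ A).Nonempty then (univ \ A).sup' h fun i => v i (zeroOutside s i A) else 0

variable {v s}

theorem le_sampledWelfare {i : Fin n} {A : Finset (Fin n)} (hi : i ∉ A) :
    v i (zeroOutside s i A) ≤ sampledWelfare v s A := by
  have hmem : i ∈ univ \ A := by simpa using hi
  rw [sampledWelfare, dif_pos ⟨i, hmem⟩]
  exact le_sup' (fun i => v i (zeroOutside s i A)) hmem

theorem sampledWelfare_nonneg (hnonneg : ∀ i s, 0 ≤ v i s) (A : Finset (Fin n)) :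
    0 ≤ sampledWelfare v s A := by
  by_cases h : (univ \ A).Nonempty
  · obtain ⟨i, hi⟩ := h
    exact (hnonneg i _).trans (le_sampledWelfare (mem_sdiff.mp hi).2)
  · rw [sampledWelfare, dif_neg h]

theorem le_bernoulliExpect_sampledWelfare (hnonneg : ∀ i s, 0 ≤ v i s)
    (hsos : ∀ i, SOS (v i)) {i₁ i₂ : Fin n} (hne : i₁ ≠ i₂) {p : ℝ} (hp0 : 0 ≤ p)
    (hp1 : p ≤ 1) :
    p * (1 - p) * v i₁ s + p ^ 2 * (1 - p) * v i₂ s ≤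
      bernoulliExpect p univ (sampledWelfare v s) := by
  set T := (univ.erase i₁).erase i₂
  have hi₁T : i₁ ∉ insert i₂ T := by simp [T, hne]
  have hi₂T : i₂ ∉ T := by simp [T]
  have hU : (univ : Finset (Fin n)) = insert i₁ (insert i₂ T) := by
    ext j; by_cases h₁ : j = i₁ <;> by_cases h₂ : j = i₂ <;> simp [T, h₁, h₂]
  have hE₁ : p * v i₁ s ≤ bernoulliExpect p (insert i₂ T) (sampledWelfare v s) := by
    calc p * v i₁ s = p * v i₁ (zeroOutside s i₁ (insert i₂ T)) := by
          rw [zeroOutside_eq_self s fun j hj => by simpa [T, hj] using em (j = i₂)]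
      _ ≤ bernoulliExpect p (insert i₂ T) fun A => v i₁ (zeroOutside s i₁ A) :=
          ((hsos i₁).hasDiminishingReturns_zeroOutside s i₁).mul_le_bernoulliExpect
            (hnonneg _ _) hp0 hp1 _
      _ ≤ _ := bernoulliExpect_mono hp0 hp1 fun A hA => le_sampledWelfare fun h => hi₁T (hA h)
  have hE₂ : p * v i₂ s ≤ bernoulliExpect p T fun A => sampledWelfare v s (insert i₁ A) := by
    calc p * v i₂ s = p * v i₂ (zeroOutside s i₂ (insert i₁ T)) := by
          rw [zeroOutside_eq_self s fun j hj => by simpa [T, hj] using em (j = i₁)]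
      _ ≤ bernoulliExpect p T fun A => v i₂ (zeroOutside s i₂ (insert i₁ A)) :=
          (((hsos i₂).hasDiminishingReturns_zeroOutside s i₂).comp_insert
            i₁).mul_le_bernoulliExpect (hnonneg _ _) hp0 hp1 _
      _ ≤ _ := bernoulliExpect_mono hp0 hp1 fun A hA =>
          le_sampledWelfare fun h => hi₂T (hA ((mem_insert.mp h).resolve_left hne.symm))
  have hE₃ : 0 ≤ bernoulliExpect p T fun A => sampledWelfare v s (insert i₁ (insert i₂ A)) :=
    bernoulliExpect_nonneg hp0 hp1 fun A _ => sampledWelfare_nonneg hnonneg _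
  rw [hU, bernoulliExpect_insert p hi₁T,
    bernoulliExpect_insert p hi₂T fun A => sampledWelfare v s (insert i₁ A)]
  have hq : 0 ≤ 1 - p := sub_nonneg.mpr hp1
  nlinarith [mul_le_mul_of_nonneg_left hE₁ hq, mul_le_mul_of_nonneg_left hE₂ (mul_nonneg hp0 hq),
    mul_nonneg (mul_nonneg hp0 hp0) hE₃]

end Welfare

theorem bernoulliExpect_univ_fin {n : ℕ} (p : ℝ) (f : Finset (Fin n) → ℝ) :
    bernoulliExpect p univ f = ∑ A ∈ univ.powerset, p ^ A.card * (1 - p) ^ (n - A.card) * f A := by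
  rw [bernoulliExpect, card_univ, Fintype.card_fin]

theorem stmt_10_general {n : ℕ} (v : Fin n → (Fin n → NNReal) → ℝ)
    (hnonneg : ∀ i s, 0 ≤ v i s) (hsos : ∀ i, SOS (v i))
    (s : Fin n → NNReal) (i1 i2 : Fin n) (hne : i1 ≠ i2)
    (hpos : 0 < v i1 s)
    (p : ℝ) (hp0 : 0 ≤ p) (hp1 : p ≤ 1) :
    (∑ A ∈ (Finset.univ : Finset (Fin n)).powerset,
        p ^ A.card * (1 - p) ^ (n - A.card) *
          (if h : ((Finset.univ : Finset (Fin n)) \ A).Nonempty then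
            (Finset.univ \ A).sup' h (fun i => v i (zeroOutside s i A)) else 0) ≥
      p * (1 - p) * v i1 s + p ^ 2 * (1 - p) * v i2 s) ∧
    (∑ A ∈ (Finset.univ : Finset (Fin n)).powerset,
        p ^ A.card * (1 - p) ^ (n - A.card) *
          (if h : ((Finset.univ : Finset (Fin n)) \ A).Nonempty then
            (Finset.univ \ A).sup' h (fun i => v i (zeroOutside s i A)) else 0)) / v i1 s ≥
      p * (1 - p) * (1 + p * (v i2 s / v i1 s)) := by
  rw [← bernoulliExpect_univ_fin]
  have hbound : p * (1 - p) * v i1 s + p ^ 2 * (1 - p) * v i2 s ≤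
      bernoulliExpect p univ (sampledWelfare v s) :=
    le_bernoulliExpect_sampledWelfare hnonneg hsos hne hp0 hp1
  refine ⟨hbound, ?_⟩
  rw [ge_iff_le, le_div_iff₀ hpos]
  calc p * (1 - p) * (1 + p * (v i2 s / v i1 s)) * v i1 s
      = p * (1 - p) * v i1 s + p ^ 2 * (1 - p) * v i2 s := by field_simp
    _ ≤ _ := hbound

theorem stmt_10 {n : ℕ} (v : Fin n → (Fin n → NNReal) → ℝ)
    (hnonneg : ∀ i s, 0 ≤ v i s) (hmono : ∀ i, Monotone (v i)) (hsos : ∀ i, SOS (v i))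
    (s : Fin n → NNReal) (i1 i2 : Fin n) (hne : i1 ≠ i2)
    (h1 : ∀ j, v j s ≤ v i1 s) (h2 : ∀ j, j ≠ i1 → v j s ≤ v i2 s)
    (hpos : 0 < v i1 s)
    (p : ℝ) (hp0 : 0 ≤ p) (hp1 : p ≤ 1) :
    (∑ A ∈ (Finset.univ : Finset (Fin n)).powerset,
        p ^ A.card * (1 - p) ^ (n - A.card) *
          (if h : ((Finset.univ : Finset (Fin n)) \ A).Nonempty then
            (Finset.univ \ A).sup' h (fun i => v i (zeroOutside s i A)) else 0) ≥
      p * (1 - p) * v i1 s + p ^ 2 * (1 - p) * v i2 s) ∧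
    (∑ A ∈ (Finset.univ : Finset (Fin n)).powerset,
        p ^ A.card * (1 - p) ^ (n - A.card) *
          (if h : ((Finset.univ : Finset (Fin n)) \ A).Nonempty then
            (Finset.univ \ A).sup' h (fun i => v i (zeroOutside s i A)) else 0)) / v i1 s ≥
      p * (1 - p) * (1 + p * (v i2 s / v i1 s)) :=
  stmt_10_general v hnonneg hsos s i1 i2 hne hpos p hp0 hp1
end

section
/- If p ∈ (0,1) satisfies 2p⁴ - 4p³ + 5p² - 1 = 0, then the function g(p) = p(1-p²)/(1 + 2p²(1-p)) is stationary at p; moreover there exists p ∈ (0,1) with 2p⁴ - 4p³ + 5p² - 1 = 0 and g(p) > 0.3016. -/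
/-!
The quotient rule gives `g' = -(2p⁴ - 4p³ + 5p² - 1) / (1 + 2p²(1-p))²`, so the roots of the quartic
in `(0, 1)` are exactly the stationary points of `g`. The quartic changes sign on `[0.5395, 0.542]`,
and on that interval `g` stays above `0.3016`.
-/

noncomputable def approxRatio (x : ℝ) : ℝ := x * (1 - x ^ 2) / (1 + 2 * x ^ 2 * (1 - x))

lemma one_add_two_mul_sq_mul_one_sub_pos {x : ℝ} (hx : x ≤ 1) : 0 < 1 + 2 * x ^ 2 * (1 - x) := by
  have : 0 ≤ 1 - x := sub_nonneg.2 hx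
  positivity

lemma hasDerivAt_approxRatio {x : ℝ} (hx : 1 + 2 * x ^ 2 * (1 - x) ≠ 0) :
    HasDerivAt approxRatio
      (-(2 * x ^ 4 - 4 * x ^ 3 + 5 * x ^ 2 - 1) / (1 + 2 * x ^ 2 * (1 - x)) ^ 2) x := by
  have hnum := (hasDerivAt_id' x).fun_mul ((hasDerivAt_const x (1 : ℝ)).fun_sub (hasDerivAt_pow 2 x))
  have hden := (hasDerivAt_const x (1 : ℝ)).fun_add
    (((hasDerivAt_pow 2 x).const_mul (2 : ℝ)).fun_mul
      ((hasDerivAt_const x (1 : ℝ)).fun_sub (hasDerivAt_id' x)))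
  refine (hnum.fun_div hden hx).congr_deriv ?_
  field_simp
  ring

lemma deriv_approxRatio_eq_zero {x : ℝ} (hx : x ≤ 1)
    (hroot : 2 * x ^ 4 - 4 * x ^ 3 + 5 * x ^ 2 - 1 = 0) :
    deriv approxRatio x = 0 := by
  rw [(hasDerivAt_approxRatio (one_add_two_mul_sq_mul_one_sub_pos hx).ne').deriv, hroot]
  simp

lemma exists_root_mem_Ioo :
    ∃ x ∈ Set.Ioo (0.5395 : ℝ) 0.542, 2 * x ^ 4 - 4 * x ^ 3 + 5 * x ^ 2 - 1 = 0 := by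
  have hcont : ContinuousOn (fun x : ℝ => 2 * x ^ 4 - 4 * x ^ 3 + 5 * x ^ 2 - 1)
      (Set.Icc 0.5395 0.542) := by fun_prop
  exact intermediate_value_Ioo (by norm_num) hcont (by constructor <;> norm_num)

lemma approxRatio_gt_of_mem_Icc {x : ℝ} (hx : x ∈ Set.Icc (0.5395 : ℝ) 0.542) :
    0.3016 < approxRatio x := by
  obtain ⟨hlo, hhi⟩ := hx
  rw [approxRatio, lt_div_iff₀ (one_add_two_mul_sq_mul_one_sub_pos (by linarith))]
  have h1 : 0 ≤ (x - 0.5395) * (0.542 - x) := mul_nonneg (by linarith) (by linarith)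
  have h2 : 0 ≤ (x - 0.5395) ^ 2 * (0.542 - x) := mul_nonneg (sq_nonneg _) (by linarith)
  nlinarith

theorem stmt_13 :
    (∀ p ∈ Set.Ioo (0:ℝ) 1, 2 * p ^ 4 - 4 * p ^ 3 + 5 * p ^ 2 - 1 = 0 →
      deriv (fun x : ℝ => x * (1 - x ^ 2) / (1 + 2 * x ^ 2 * (1 - x))) p = 0) ∧
    (∃ p ∈ Set.Ioo (0:ℝ) 1, 2 * p ^ 4 - 4 * p ^ 3 + 5 * p ^ 2 - 1 = 0 ∧
      p * (1 - p ^ 2) / (1 + 2 * p ^ 2 * (1 - p)) > 0.3016) := by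
  refine ⟨fun p hp hroot => deriv_approxRatio_eq_zero hp.2.le hroot, ?_⟩
  obtain ⟨p, hp, hroot⟩ := exists_root_mem_Ioo
  exact ⟨p, ⟨by linarith [hp.1], by linarith [hp.2]⟩, hroot,
    approxRatio_gt_of_mem_Icc (Set.Ioo_subset_Icc_self hp)⟩
end

section
/- Combined mechanism guarantee: there exist p, q ∈ [0,1] such that for every r ∈ [0,1], q·½(1-r) + (1-q)·p(1-p)(1+pr) ≥ 0.3016. -/
theorem stmt_14 :
    ∃ p ∈ Set.Icc (0:ℝ) 1, ∃ q ∈ Set.Icc (0:ℝ) 1, ∀ r ∈ Set.Icc (0:ℝ) 1,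
      q * ((1 - r) / 2) + (1 - q) * (p * (1 - p) * (1 + p * r)) ≥ 0.3016 := by
  refine ⟨27/50, by norm_num, 423/2000, by norm_num, ?_⟩
  rintro r ⟨h0, h1⟩
  nlinarith [h0, h1]
end

section
/- If v : (Fin n → ℝ) → ℝ is SOS and one composes each coordinate with a monotone increasing bijection φ_i : ℝ → ℝ, the resulting function w(s) = v(φ_1(s_1), …, φ_n(s_n)) is again SOS. -/
theorem stmt_17 {n : ℕ} (v : (Fin n → ℝ) → ℝ) (hsos : SOSr v)
    (φ : Fin n → ℝ → ℝ) (hφmono : ∀ i, Monotone (φ i))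
    (hφbij : ∀ i, Function.Bijective (φ i)) :
    SOSr (fun s => v (fun i => φ i (s i))) := by
  intro i s s' t hle heq hst
  have key : ∀ (u : Fin n → ℝ) (t : ℝ),
      (fun j => φ j (Function.update u i t j)) =
      Function.update (fun j => φ j (u j)) i (φ i t) := by
    intro u t
    funext j
    by_cases h : j = i
    · subst h; simp
    · simp [Function.update_of_ne h]
  simp only [key]
  exact hsos i (fun j => φ j (s j)) (fun j => φ j (s' j)) (φ i t)
    (fun j => hφmono j (hle j)) (by simp [heq]) (hφmono i hst)
end
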